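/- arXiv:1307.7333 — 6 statements merged into one kernel-verified Lean document; each statement's English description precedes it below -/
import Mathlib

section
/- A Z-tensor is a nonsingular M-tensor if and only if it is semi-positive. That is, an m-order n-dimensional real tensor A = s I − B with B entrywise nonnegative satisfies s > ρ(B) if and only if there exists x > 0 entrywise with A x^{m-1} > 0 entrywise. -/
noncomputable section

/-- The tensor-vector product `(A x^{m-1})_i` for an `m`-order, `n`-dimensional real tensor,
represented as `A : Fin n → (Fin (m-1) → Fin n) → ℝ` (first index, then the remaining indices). -/
def tmul {n k : ℕ} (A : Fin n → (Fin k → Fin n) → ℝ) (x : Fin n → ℝ) (i : Fin n) : ℝ :=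
  ∑ js : Fin k → Fin n, A i js * ∏ j, x (js j)

/-- A tensor is semi-positive if there is an entrywise positive `x` with `A x^{m-1} > 0`. -/
def SemiPositive {n k : ℕ} (A : Fin n → (Fin k → Fin n) → ℝ) : Prop :=
  ∃ x : Fin n → ℝ, (∀ i, 0 < x i) ∧ ∀ i, 0 < tmul A x i

/-- The complex tensor-vector product. -/
def ctprod {n k : ℕ} (A : Fin n → (Fin k → Fin n) → ℝ) (x : Fin n → ℂ) (i : Fin n) : ℂ :=
  ∑ js : Fin k → Fin n, (A i js : ℂ) * ∏ j, x (js j)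

/-- `lam` is an eigenvalue of `A` if `A x^{m-1} = lam x^{[m-1]}` for some nonzero complex `x`. -/
def IsEigenvalue {n k : ℕ} (A : Fin n → (Fin k → Fin n) → ℝ) (lam : ℂ) : Prop :=
  ∃ x : Fin n → ℂ, x ≠ 0 ∧ ∀ i, ctprod A x i = lam * x i ^ k

/-- The spectral radius: the maximum modulus of the eigenvalues. -/
def specRad {n k : ℕ} (A : Fin n → (Fin k → Fin n) → ℝ) : ℝ :=
  sSup ((fun lam : ℂ => ‖lam‖) '' {lam | IsEigenvalue A lam})

/-- The unit tensor: diagonal entries 1, off-diagonal entries 0. -/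
def unitT (n k : ℕ) : Fin n → (Fin k → Fin n) → ℝ :=
  fun i js => if js = (fun _ => i) then 1 else 0

/-- A Z-tensor: all off-diagonal entries are nonpositive. -/
def ZTensor {n k : ℕ} (A : Fin n → (Fin k → Fin n) → ℝ) : Prop :=
  ∀ i js, js ≠ (fun _ => i) → A i js ≤ 0

/-- A monotone tensor: `A x^{m-1} ≥ 0` implies `x ≥ 0`. -/
def MonotoneT {n k : ℕ} (A : Fin n → (Fin k → Fin n) → ℝ) : Prop :=
  ∀ x : Fin n → ℝ, (∀ i, 0 ≤ tmul A x i) → ∀ i, 0 ≤ x i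

section Basics

variable {n k : ℕ}

lemma tmul_unitT (hk : 0 < k) (x : Fin n → ℝ) (i : Fin n) :
    tmul (unitT n k) x i = x i ^ k := by
  unfold tmul unitT
  rw [Finset.sum_eq_single (fun _ => i)]
  · simp [Finset.prod_const]
  · intro b _ hb; simp [hb]
  · simp

lemma tmul_sub (A B : Fin n → (Fin k → Fin n) → ℝ) (x : Fin n → ℝ) (i : Fin n) :
    tmul (fun i js => A i js - B i js) x i = tmul A x i - tmul B x i := by
  unfold tmul
  rw [← Finset.sum_sub_distrib]
  exact Finset.sum_congr rfl fun a _ => by ring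

lemma tmul_smul_unitT (hk : 0 < k) (s : ℝ) (B : Fin n → (Fin k → Fin n) → ℝ)
    (x : Fin n → ℝ) (i : Fin n) :
    tmul (fun i js => s * unitT n k i js - B i js) x i = s * x i ^ k - tmul B x i := by
  rw [tmul_sub]
  congr 1
  rw [← tmul_unitT hk x i]
  unfold tmul unitT
  rw [Finset.mul_sum]
  exact Finset.sum_congr rfl fun a _ => by ring

lemma tmul_nonneg {B : Fin n → (Fin k → Fin n) → ℝ} {x : Fin n → ℝ}
    (hB : ∀ i a, 0 ≤ B i a) (hx : ∀ i, 0 ≤ x i) (i : Fin n) : 0 ≤ tmul B x i :=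
  Finset.sum_nonneg fun a _ => mul_nonneg (hB i a)
    (Finset.prod_nonneg fun j _ => hx (a j))

lemma tmul_pos (hn : 0 < n) {B : Fin n → (Fin k → Fin n) → ℝ} {x : Fin n → ℝ}
    (hB : ∀ i a, 0 < B i a) (hx : ∀ i, 0 < x i) (i : Fin n) : 0 < tmul B x i := by
  have : Nonempty (Fin n) := ⟨⟨0, hn⟩⟩
  exact Finset.sum_pos (fun a _ => mul_pos (hB i a)
    (Finset.prod_pos fun j _ => hx (a j))) Finset.univ_nonempty

lemma tmul_allones (x : Fin n → ℝ) (i : Fin n) :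
    tmul (n := n) (k := k) (fun _ _ => (1:ℝ)) x i = (∑ j, x j) ^ k := by
  unfold tmul
  simp only [one_mul]
  rw [← Fin.prod_const k (∑ j, x j), Finset.prod_univ_sum]
  simp [Fintype.piFinset_univ]

lemma tmul_add (A B : Fin n → (Fin k → Fin n) → ℝ) (x : Fin n → ℝ) (i : Fin n) :
    tmul (fun i js => A i js + B i js) x i = tmul A x i + tmul B x i := by
  unfold tmul
  rw [← Finset.sum_add_distrib]
  exact Finset.sum_congr rfl fun a _ => by ring

lemma continuous_tmul (B : Fin n → (Fin k → Fin n) → ℝ) (i : Fin n) :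
    Continuous fun x : Fin n → ℝ => tmul B x i := by
  unfold tmul
  exact continuous_finset_sum _ fun a _ => (continuous_const.mul
    (continuous_finset_prod _ fun j _ => continuous_apply (a j)))

end Basics
section EasyDir

variable {n k : ℕ}

lemma eigen_abs_le (hk : 0 < k) {B : Fin n → (Fin k → Fin n) → ℝ} {lam : ℂ}
    (h : IsEigenvalue B lam) :
    ‖lam‖ ≤ ∑ i, ∑ a : Fin k → Fin n, |B i a| := by
  obtain ⟨y, hy0, hy⟩ := h
  obtain ⟨j, hj⟩ : ∃ j, y j ≠ 0 := by
    by_contra h; push_neg at h; exact hy0 (funext h)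
  have : Nonempty (Fin n) := ⟨j⟩
  obtain ⟨i₀, -, hmax⟩ := Finset.exists_max_image Finset.univ
    (fun i => ‖y i‖) Finset.univ_nonempty
  have hpos : 0 < ‖y i₀‖ :=
    lt_of_lt_of_le (by simpa using hj) (hmax j (Finset.mem_univ j))
  have hpk : 0 < ‖y i₀‖ ^ k := pow_pos hpos k
  have key : ‖lam‖ * ‖y i₀‖ ^ k ≤
      (∑ a : Fin k → Fin n, |B i₀ a|) * ‖y i₀‖ ^ k := by
    have h1 : ‖lam‖ * ‖y i₀‖ ^ k = ‖ctprod B y i₀‖ := by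
      rw [hy i₀]; rw [norm_mul, norm_pow]
    rw [h1]
    calc ‖ctprod B y i₀‖
        ≤ ∑ a : Fin k → Fin n, ‖(B i₀ a : ℂ) * ∏ j, y (a j)‖ :=
          norm_sum_le _ _
      _ ≤ ∑ a : Fin k → Fin n, |B i₀ a| * ‖y i₀‖ ^ k := by
          apply Finset.sum_le_sum
          intro a _
          rw [norm_mul, Complex.norm_real, Real.norm_eq_abs, norm_prod]
          refine mul_le_mul_of_nonneg_left ?_ (abs_nonneg (B i₀ a))
          refine le_trans (Finset.prod_le_prod (fun j _ => norm_nonneg _)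
            (fun j _ => hmax _ (Finset.mem_univ _))) ?_
          simp [Finset.prod_const]
      _ = (∑ a : Fin k → Fin n, |B i₀ a|) * ‖y i₀‖ ^ k := by
          rw [Finset.sum_mul]
  have h2 : ‖lam‖ ≤ ∑ a : Fin k → Fin n, |B i₀ a| :=
    le_of_mul_le_mul_right key hpk
  refine h2.trans ?_
  exact Finset.single_le_sum (f := fun i => ∑ a : Fin k → Fin n, |B i a|)
    (fun i _ => Finset.sum_nonneg fun a _ => abs_nonneg _) (Finset.mem_univ i₀)

lemma bddAbove_specSet (hk : 0 < k) (B : Fin n → (Fin k → Fin n) → ℝ) :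
    BddAbove ((fun lam : ℂ => ‖lam‖) '' {lam | IsEigenvalue B lam}) := by
  refine ⟨∑ i, ∑ a : Fin k → Fin n, |B i a|, ?_⟩
  rintro r ⟨lam, hlam, rfl⟩
  exact eigen_abs_le hk hlam

lemma specRad_lt_of_semiPositive (hn : 0 < n) (hk : 0 < k) {s : ℝ}
    {B : Fin n → (Fin k → Fin n) → ℝ} (hB : ∀ i a, 0 ≤ B i a)
    (hsp : SemiPositive (fun i js => s * unitT n k i js - B i js)) :
    specRad B < s := by
  have : Nonempty (Fin n) := ⟨⟨0, hn⟩⟩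
  obtain ⟨x, hx, hpos⟩ := hsp
  have hlt : ∀ i, tmul B x i < s * x i ^ k := by
    intro i
    have := hpos i
    rw [tmul_smul_unitT hk] at this
    linarith
  set r : ℝ := Finset.univ.sup' Finset.univ_nonempty
    (fun i => tmul B x i / x i ^ k) with hr
  have hxk : ∀ i, (0:ℝ) < x i ^ k := fun i => pow_pos (hx i) k
  have hr0 : 0 ≤ r := by
    refine le_trans ?_ (Finset.le_sup' _ (Finset.mem_univ (⟨0, hn⟩ : Fin n)))
    exact div_nonneg (tmul_nonneg hB (fun i => (hx i).le) _) (hxk _).le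
  have hrs : r < s := by
    rw [hr, Finset.sup'_lt_iff]
    intro i _
    rw [div_lt_iff₀ (hxk i)]
    exact hlt i
  refine lt_of_le_of_lt ?_ hrs
  refine Real.sSup_le ?_ hr0
  rintro v ⟨lam, hlam, rfl⟩
  -- show |lam| ≤ r
  obtain ⟨y, hy0, hy⟩ := hlam
  obtain ⟨j, hj⟩ : ∃ j, y j ≠ 0 := by
    by_contra h; push_neg at h; exact hy0 (funext h)
  obtain ⟨i₀, -, hmax⟩ := Finset.exists_max_image Finset.univ
    (fun i => ‖y i‖ / x i) Finset.univ_nonempty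
  set t : Fin n → ℝ := fun i => ‖y i‖ / x i with ht
  have hyx : ∀ i, x i * t i = ‖y i‖ := by
    intro i
    rw [ht, mul_comm, div_mul_cancel₀ _ (hx i).ne']
  have ht0 : 0 < t i₀ := by
    have h1 : 0 < t j := div_pos (by simpa using hj) (hx j)
    exact lt_of_lt_of_le h1 (hmax j (Finset.mem_univ j))
  have hyi₀ : 0 < ‖y i₀‖ ^ k := by
    rw [← hyx]; exact pow_pos (mul_pos (hx i₀) ht0) k
  have key : ‖lam‖ * ‖y i₀‖ ^ k ≤ r * ‖y i₀‖ ^ k := by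
    have h1 : ‖lam‖ * ‖y i₀‖ ^ k = ‖ctprod B y i₀‖ := by
      rw [hy i₀]; rw [norm_mul, norm_pow]
    rw [h1]
    calc ‖ctprod B y i₀‖
        ≤ ∑ a : Fin k → Fin n, ‖(B i₀ a : ℂ) * ∏ j, y (a j)‖ :=
          norm_sum_le _ _
      _ ≤ ∑ a : Fin k → Fin n, B i₀ a * ((∏ j, x (a j)) * t i₀ ^ k) := by
          apply Finset.sum_le_sum
          intro a _
          rw [norm_mul, Complex.norm_real, Real.norm_eq_abs, norm_prod, abs_of_nonneg (hB i₀ a)]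
          refine mul_le_mul_of_nonneg_left ?_ (hB i₀ a)
          calc (∏ j, ‖y (a j)‖) = ∏ j, x (a j) * t (a j) := by
                exact Finset.prod_congr rfl fun j _ => (hyx (a j)).symm
            _ ≤ ∏ j, x (a j) * t i₀ := by
                refine Finset.prod_le_prod (fun j _ => ?_) (fun j _ => ?_)
                · exact mul_nonneg (hx _).le (le_trans (div_nonneg (norm_nonneg _) (hx _).le) (le_refl _))
                · exact mul_le_mul_of_nonneg_left (hmax _ (Finset.mem_univ _)) (hx _).le
            _ = (∏ j, x (a j)) * t i₀ ^ k := by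
                rw [Finset.prod_mul_distrib, Finset.prod_const]
                simp
      _ = tmul B x i₀ * t i₀ ^ k := by
          unfold tmul; rw [Finset.sum_mul]
          exact Finset.sum_congr rfl fun a _ => by ring
      _ ≤ r * ‖y i₀‖ ^ k := by
          have h2 : tmul B x i₀ ≤ r * x i₀ ^ k := by
            have := Finset.le_sup' (fun i => tmul B x i / x i ^ k) (Finset.mem_univ i₀)
            rw [← hr, div_le_iff₀ (hxk i₀)] at this
            linarith [this]
          calc tmul B x i₀ * t i₀ ^ k ≤ (r * x i₀ ^ k) * t i₀ ^ k :=
                mul_le_mul_of_nonneg_right h2 (pow_nonneg ht0.le k)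
            _ = r * ‖y i₀‖ ^ k := by
                rw [← hyx i₀, mul_pow]; ring
  exact le_of_mul_le_mul_right key hyi₀

end EasyDir
section Supv

lemma continuousOn_finset_sup' {ι X : Type*} [TopologicalSpace X] {s : Finset ι}
    (hs : s.Nonempty) {f : ι → X → ℝ} {K : Set X} (hf : ∀ i, ContinuousOn (f i) K) :
    ContinuousOn (fun x => s.sup' hs fun i => f i x) K := by
  induction hs using Finset.Nonempty.cons_induction with
  | singleton a => simpa using hf a
  | cons a s h hs ih =>
      have : (fun x => (Finset.cons a s h).sup' (Finset.cons_nonempty h) fun i => f i x)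
          = fun x => max (f a x) (s.sup' hs fun i => f i x) := by
        funext x; rw [Finset.sup'_cons hs]
      rw [this]
      exact (hf a).sup ih

lemma continuous_finset_sup' {ι X : Type*} [TopologicalSpace X] {s : Finset ι}
    (hs : s.Nonempty) {f : ι → X → ℝ} (hf : ∀ i, Continuous (f i)) :
    Continuous fun x => s.sup' hs fun i => f i x := by
  induction hs using Finset.Nonempty.cons_induction with
  | singleton a => simpa using hf a
  | cons a s h hs ih =>
      have : (fun x => (Finset.cons a s h).sup' (Finset.cons_nonempty h) fun i => f i x)
          = fun x => max (f a x) (s.sup' hs fun i => f i x) := by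
        funext x; rw [Finset.sup'_cons hs]
      rw [this]
      exact (hf a).sup ih

variable {n : ℕ}

def supv (hn : 0 < n) (x : Fin n → ℝ) : ℝ :=
  Finset.univ.sup' (Finset.univ_nonempty_iff.mpr ⟨⟨0, hn⟩⟩) x

lemma le_supv (hn : 0 < n) (x : Fin n → ℝ) (i : Fin n) : x i ≤ supv hn x :=
  Finset.le_sup' x (Finset.mem_univ i)

lemma supv_le (hn : 0 < n) {x : Fin n → ℝ} {a : ℝ} (h : ∀ i, x i ≤ a) : supv hn x ≤ a :=
  Finset.sup'_le _ _ fun i _ => h i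

lemma supv_lt (hn : 0 < n) {x : Fin n → ℝ} {a : ℝ} (h : ∀ i, x i < a) : supv hn x < a :=
  (Finset.sup'_lt_iff _).mpr fun i _ => h i

lemma exists_supv (hn : 0 < n) (x : Fin n → ℝ) : ∃ i, supv hn x = x i := by
  obtain ⟨i, -, hi⟩ := Finset.exists_mem_eq_sup'
    (Finset.univ_nonempty_iff.mpr ⟨⟨0, hn⟩⟩) x
  exact ⟨i, hi⟩

lemma supv_pos (hn : 0 < n) {x : Fin n → ℝ} (h : ∀ i, 0 < x i) : 0 < supv hn x :=
  lt_of_lt_of_le (h ⟨0, hn⟩) (le_supv hn x _)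

lemma supv_nonneg (hn : 0 < n) {x : Fin n → ℝ} (h : ∀ i, 0 ≤ x i) : 0 ≤ supv hn x :=
  le_trans (h ⟨0, hn⟩) (le_supv hn x _)

lemma supv_const_mul (hn : 0 < n) {c : ℝ} (hc : 0 < c) (x : Fin n → ℝ) :
    supv hn (fun i => c * x i) = c * supv hn x := by
  apply le_antisymm
  · exact supv_le hn fun i => mul_le_mul_of_nonneg_left (le_supv hn x i) hc.le
  · obtain ⟨i, hi⟩ := exists_supv hn x
    rw [hi]
    exact le_supv hn (fun i => c * x i) i

lemma supv_div (hn : 0 < n) {c : ℝ} (hc : 0 < c) (x : Fin n → ℝ) :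
    supv hn (fun i => x i / c) = supv hn x / c := by
  have h1 : ∀ i, x i / c = c⁻¹ * x i := fun i => by field_simp
  simp only [h1]
  rw [supv_const_mul hn (inv_pos.mpr hc)]
  field_simp

lemma supv_const (hn : 0 < n) (a : ℝ) : supv hn (fun _ => a) = a := by
  unfold supv
  exact Finset.sup'_const _ a

lemma continuous_supv (hn : 0 < n) : Continuous fun x : Fin n → ℝ => supv hn x :=
  continuous_finset_sup' _ fun i => continuous_apply i

end Supv
section RpowAux

variable {n k : ℕ}

lemma rpow_kinv_pos (hk : 0 < k) : (0:ℝ) < (k:ℝ)⁻¹ :=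
  inv_pos.mpr (Nat.cast_pos.mpr hk)

lemma rpow_pow_kinv (hk : 0 < k) {c : ℝ} (hc : 0 ≤ c) :
    ((c ^ k : ℝ)) ^ ((k:ℝ)⁻¹) = c := by
  rw [← Real.rpow_natCast c k, ← Real.rpow_mul hc,
    mul_inv_cancel₀ (Nat.cast_ne_zero.mpr hk.ne'), Real.rpow_one]

lemma rpow_kinv_pow (hk : 0 < k) {A : ℝ} (hA : 0 ≤ A) :
    (A ^ ((k:ℝ)⁻¹)) ^ k = A := by
  rw [← Real.rpow_natCast (A ^ ((k:ℝ)⁻¹)) k, ← Real.rpow_mul hA,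
    inv_mul_cancel₀ (Nat.cast_ne_zero.mpr hk.ne'), Real.rpow_one]

lemma rpow_aux_lt (hk : 0 < k) {A A' c : ℝ} (hA : 0 ≤ A) (hc : 0 < c)
    (h : A < c ^ k * A') : A ^ ((k:ℝ)⁻¹) < c * A' ^ ((k:ℝ)⁻¹) := by
  have hck : (0:ℝ) < c ^ k := pow_pos hc k
  have hA' : 0 < A' := by nlinarith
  calc A ^ ((k:ℝ)⁻¹) < (c ^ k * A') ^ ((k:ℝ)⁻¹) :=
        Real.rpow_lt_rpow hA h (rpow_kinv_pos hk)
    _ = c * A' ^ ((k:ℝ)⁻¹) := by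
        rw [Real.mul_rpow hck.le hA'.le, rpow_pow_kinv hk hc.le]

lemma rpow_aux_le (hk : 0 < k) {A A' c : ℝ} (hA : 0 ≤ A) (hc : 0 ≤ c) (hA' : 0 ≤ A')
    (h : A ≤ c * A') : A ^ ((k:ℝ)⁻¹) ≤ c ^ ((k:ℝ)⁻¹) * A' ^ ((k:ℝ)⁻¹) := by
  calc A ^ ((k:ℝ)⁻¹) ≤ (c * A') ^ ((k:ℝ)⁻¹) :=
        Real.rpow_le_rpow hA h (rpow_kinv_pos hk).le
    _ = c ^ ((k:ℝ)⁻¹) * A' ^ ((k:ℝ)⁻¹) := Real.mul_rpow hc hA'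

lemma tmul_lt_mul (hk : 0 < k) {B : Fin n → (Fin k → Fin n) → ℝ}
    (hB : ∀ i a, 0 < B i a) {x y : Fin n → ℝ} (hx : ∀ i, 0 ≤ x i) {r : ℝ} (hr : 0 < r)
    (h : ∀ j, x j ≤ r * y j) {j₀ : Fin n} (hj₀ : x j₀ < r * y j₀) (i : Fin n) :
    tmul B x i < r ^ k * tmul B y i := by
  unfold tmul
  rw [Finset.mul_sum]
  apply Finset.sum_lt_sum
  · intro a _
    have h1 : (∏ j, x (a j)) ≤ ∏ j, (r * y (a j)) :=
      Finset.prod_le_prod (fun j _ => hx _) (fun j _ => h _)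
    have h2 : (∏ j, (r * y (a j))) = r ^ k * ∏ j, y (a j) := by
      rw [Finset.prod_mul_distrib, Finset.prod_const]
      simp
    calc B i a * ∏ j, x (a j) ≤ B i a * (r ^ k * ∏ j, y (a j)) :=
          mul_le_mul_of_nonneg_left (h1.trans_eq h2) (hB i a).le
      _ = r ^ k * (B i a * ∏ j, y (a j)) := by ring
  · refine ⟨fun _ => j₀, Finset.mem_univ _, ?_⟩
    have h1 : (∏ _j : Fin k, x j₀) = x j₀ ^ k := by
      rw [Finset.prod_const]; simp
    have h2 : (∏ _j : Fin k, y j₀) = y j₀ ^ k := by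
      rw [Finset.prod_const]; simp
    have h3 : x j₀ ^ k < (r * y j₀) ^ k := pow_lt_pow_left₀ hj₀ (hx j₀) hk.ne'
    calc B i ((fun _ => j₀)) * ∏ j, x j₀ = B i (fun _ => j₀) * x j₀ ^ k := by rw [h1]
      _ < B i (fun _ => j₀) * ((r * y j₀) ^ k) :=
          mul_lt_mul_of_pos_left h3 (hB i _)
      _ = r ^ k * (B i (fun _ => j₀) * ∏ j, y j₀) := by rw [h2, mul_pow]; ring

end RpowAux
section FixPt

variable {n k : ℕ}

lemma exists_pos_eigenvec (hn : 0 < n) (hk : 0 < k) {B : Fin n → (Fin k → Fin n) → ℝ}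
    (hB : ∀ i a, 0 < B i a) :
    ∃ (x : Fin n → ℝ) (lam : ℝ), (∀ i, 0 < x i) ∧ (∀ i, x i ≤ 1) ∧ (∃ i₀, x i₀ = 1) ∧
      0 ≤ lam ∧ ∀ i, tmul B x i = lam * x i ^ k := by
  haveI : Nonempty (Fin n) := ⟨⟨0, hn⟩⟩
  -- the root map
  set T : (Fin n → ℝ) → (Fin n → ℝ) := fun x i => (tmul B x i) ^ ((k:ℝ)⁻¹) with hT
  have hTpos : ∀ x : Fin n → ℝ, (∀ i, 0 < x i) → ∀ i, 0 < T x i :=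
    fun x hx i => Real.rpow_pos_of_pos (tmul_pos hn hB hx i) _
  -- constants
  set Cb : ℝ := ∑ i, ∑ a : Fin k → Fin n, B i a with hCb
  set cb : ℝ := Finset.univ.inf'
    (Finset.univ_nonempty_iff.mpr inferInstance)
    (fun p : Fin n × (Fin k → Fin n) => B p.1 p.2) with hcb
  have hcb_le : ∀ i a, cb ≤ B i a := fun i a =>
    Finset.inf'_le _ (Finset.mem_univ (⟨i, a⟩ : Fin n × (Fin k → Fin n)))
  have hcb_pos : 0 < cb := by
    obtain ⟨p, -, hp⟩ := Finset.exists_mem_eq_inf'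
      (Finset.univ_nonempty_iff.mpr inferInstance)
      (fun p : Fin n × (Fin k → Fin n) => B p.1 p.2)
    rw [hcb, hp]; exact hB p.1 p.2
  have hle_Cb : ∀ i a, B i a ≤ Cb := by
    intro i a
    refine le_trans (Finset.single_le_sum (f := fun a => B i a)
      (fun a _ => (hB i a).le) (Finset.mem_univ a)) ?_
    exact Finset.single_le_sum (f := fun i => ∑ a : Fin k → Fin n, B i a)
      (fun i _ => Finset.sum_nonneg fun a _ => (hB i a).le) (Finset.mem_univ i)
  set κ0 : ℝ := Cb / cb with hκ0def
  have hκ0_one : 1 ≤ κ0 := by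
    rw [hκ0def, le_div_iff₀ hcb_pos, one_mul]
    exact le_trans (hcb_le ⟨0, hn⟩ (fun _ => ⟨0, hn⟩)) (hle_Cb _ _)
  have hκ0_pos : 0 < κ0 := lt_of_lt_of_le one_pos hκ0_one
  have hentry : ∀ i i' a, B i a ≤ κ0 * B i' a := by
    intro i i' a
    calc B i a ≤ Cb := hle_Cb i a
      _ = κ0 * cb := by rw [hκ0def, div_mul_cancel₀ _ hcb_pos.ne']
      _ ≤ κ0 * B i' a := mul_le_mul_of_nonneg_left (hcb_le i' a) hκ0_pos.le
  have htm_ratio : ∀ x : Fin n → ℝ, (∀ i, 0 ≤ x i) → ∀ i i',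
      tmul B x i ≤ κ0 * tmul B x i' := by
    intro x hx i i'
    unfold tmul
    rw [Finset.mul_sum]
    refine Finset.sum_le_sum fun a _ => ?_
    calc B i a * ∏ j, x (a j) ≤ (κ0 * B i' a) * ∏ j, x (a j) :=
          mul_le_mul_of_nonneg_right (hentry i i' a)
            (Finset.prod_nonneg fun j _ => hx (a j))
      _ = κ0 * (B i' a * ∏ j, x (a j)) := by ring
  set κ : ℝ := κ0 ^ ((k:ℝ)⁻¹) with hκdef
  have hκ_one : 1 ≤ κ := by
    rw [hκdef]
    calc (1:ℝ) = 1 ^ ((k:ℝ)⁻¹) := (Real.one_rpow _).symm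
      _ ≤ κ0 ^ ((k:ℝ)⁻¹) := Real.rpow_le_rpow zero_le_one hκ0_one (rpow_kinv_pos hk).le
  have hκ_pos : 0 < κ := lt_of_lt_of_le one_pos hκ_one
  have hκinv_pos : 0 < κ⁻¹ := inv_pos.mpr hκ_pos
  have hκinv_le : κ⁻¹ ≤ 1 := by
    rw [inv_le_one_iff₀]; right; exact hκ_one
  have hTratio : ∀ x : Fin n → ℝ, (∀ i, 0 < x i) → ∀ i i', T x i ≤ κ * T x i' := by
    intro x hx i i'
    have h0 : 0 ≤ tmul B x i := (tmul_pos hn hB hx i).le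
    have h0' : 0 ≤ tmul B x i' := (tmul_pos hn hB hx i').le
    exact rpow_aux_le hk h0 hκ0_pos.le h0' (htm_ratio x (fun j => (hx j).le) i i')
  -- the compact set K
  set K : Set (Fin n → ℝ) :=
    (Set.univ.pi fun _ : Fin n => Set.Icc κ⁻¹ 1) ∩ {x | supv hn x = 1} with hKdef
  have hmemK : ∀ x : Fin n → ℝ,
      x ∈ K ↔ (∀ i, κ⁻¹ ≤ x i ∧ x i ≤ 1) ∧ supv hn x = 1 := by
    intro x
    rw [hKdef]
    constructor
    · rintro ⟨h1, h2⟩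
      refine ⟨fun i => ?_, h2⟩
      exact Set.mem_Icc.mp (h1 i (Set.mem_univ i))
    · rintro ⟨h1, h2⟩
      exact ⟨fun i _ => Set.mem_Icc.mpr (h1 i), h2⟩
  have hKpos : ∀ x ∈ K, ∀ i, 0 < x i := by
    intro x hx i
    exact lt_of_lt_of_le hκinv_pos (((hmemK x).mp hx).1 i).1
  -- the normalized map
  set G : (Fin n → ℝ) → (Fin n → ℝ) := fun x i => T x i / supv hn (T x) with hG
  have hMT : ∀ x : Fin n → ℝ, (∀ i, 0 < x i) → 0 < supv hn (T x) :=
    fun x hx => supv_pos hn (hTpos x hx)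
  have hGpos : ∀ x : Fin n → ℝ, (∀ i, 0 < x i) → ∀ i, 0 < G x i :=
    fun x hx i => div_pos (hTpos x hx i) (hMT x hx)
  have hGK : ∀ x : Fin n → ℝ, (∀ i, 0 < x i) → G x ∈ K := by
    intro x hx
    have hM := hMT x hx
    rw [hmemK]
    refine ⟨fun i => ⟨?_, ?_⟩, ?_⟩
    · obtain ⟨i', hi'⟩ := exists_supv hn (T x)
      have h1 : supv hn (T x) ≤ κ * T x i := by rw [hi']; exact hTratio x hx i' i
      rw [hG, le_div_iff₀ hM]
      calc κ⁻¹ * supv hn (T x) ≤ κ⁻¹ * (κ * T x i) :=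
            mul_le_mul_of_nonneg_left h1 hκinv_pos.le
        _ = T x i := by field_simp
    · rw [hG, div_le_one hM]
      exact le_supv hn (T x) i
    · rw [hG]
      rw [supv_div hn hM (T x), div_self hM.ne']
  -- the functional
  set Φ : (Fin n → ℝ) → ℝ :=
    fun x => supv hn (fun i => x i / G x i) * supv hn (fun i => G x i / x i) with hΦ
  have hΦeval : ∀ w, Φ w =
      supv hn (fun i => w i / G w i) * supv hn (fun i => G w i / w i) := fun w => rfl
  -- general facts about the projective gauge
  have hone_le : ∀ x y : Fin n → ℝ, (∀ i, 0 < x i) → (∀ i, 0 < y i) →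
      1 ≤ supv hn (fun i => x i / y i) * supv hn (fun i => y i / x i) := by
    intro x y hx hy
    have i0 : Fin n := ⟨0, hn⟩
    have h1 : x i0 / y i0 ≤ supv hn (fun i => x i / y i) :=
      le_supv hn (fun i => x i / y i) i0
    have h2 : y i0 / x i0 ≤ supv hn (fun i => y i / x i) :=
      le_supv hn (fun i => y i / x i) i0
    have h3 : (x i0 / y i0) * (y i0 / x i0) = 1 := by
      rw [div_mul_div_comm, mul_comm (x i0) (y i0)]
      exact div_self (mul_pos (hy i0) (hx i0)).ne' 
    calc (1:ℝ) = (x i0 / y i0) * (y i0 / x i0) := h3.symm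
      _ ≤ supv hn (fun i => x i / y i) * supv hn (fun i => y i / x i) :=
          mul_le_mul h1 h2 (div_pos (hy i0) (hx i0)).le
            (le_trans (div_pos (hx i0) (hy i0)).le h1)
  -- key contraction step
  have hcontract : ∀ x y : Fin n → ℝ, (∀ i, 0 < x i) → (∀ i, 0 < y i) →
      1 < supv hn (fun i => x i / y i) * supv hn (fun i => y i / x i) →
      supv hn (fun i => G x i / G y i) * supv hn (fun i => G y i / G x i) <
        supv hn (fun i => x i / y i) * supv hn (fun i => y i / x i) := by
    intro x y hx hy hgt
    set r : ℝ := supv hn (fun i => x i / y i) with hr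
    set r' : ℝ := supv hn (fun i => y i / x i) with hr'
    have hr_pos : 0 < r :=
      lt_of_lt_of_le (div_pos (hx ⟨0, hn⟩) (hy ⟨0, hn⟩))
        (le_supv hn (fun i => x i / y i) ⟨0, hn⟩)
    have hr'_pos : 0 < r' :=
      lt_of_lt_of_le (div_pos (hy ⟨0, hn⟩) (hx ⟨0, hn⟩))
        (le_supv hn (fun i => y i / x i) ⟨0, hn⟩)
    have h1 : ∀ j, x j ≤ r * y j := by
      intro j
      have := le_supv hn (fun i => x i / y i) j
      rw [← hr] at this
      rw [div_le_iff₀ (hy j)] at this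
      linarith [this]
    have h3 : ∀ j, y j ≤ r' * x j := by
      intro j
      have := le_supv hn (fun i => y i / x i) j
      rw [← hr'] at this
      rw [div_le_iff₀ (hx j)] at this
      linarith [this]
    have h2 : ∃ j, x j < r * y j := by
      by_contra hcon
      push_neg at hcon
      have heq : ∀ j, x j = r * y j := fun j => le_antisymm (h1 j) (hcon j)
      have : r' = r⁻¹ := by
        rw [hr']
        have : (fun i => y i / x i) = fun _ => r⁻¹ := by
          funext i
          rw [heq i]
          rw [eq_comm, inv_eq_iff_eq_inv, inv_div]
          rw [mul_div_assoc, div_self (hy i).ne', mul_one]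
        rw [this, supv_const]
      rw [this] at hgt
      rw [mul_inv_cancel₀ hr_pos.ne'] at hgt
      exact lt_irrefl 1 hgt
    have h4 : ∃ j, y j < r' * x j := by
      by_contra hcon
      push_neg at hcon
      have heq : ∀ j, y j = r' * x j := fun j => le_antisymm (h3 j) (hcon j)
      have : r = r'⁻¹ := by
        rw [hr]
        have : (fun i => x i / y i) = fun _ => r'⁻¹ := by
          funext i
          rw [heq i]
          rw [eq_comm, inv_eq_iff_eq_inv, inv_div]
          rw [mul_div_assoc, div_self (hx i).ne', mul_one]
        rw [this, supv_const]
      rw [this] at hgt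
      rw [inv_mul_cancel₀ hr'_pos.ne'] at hgt
      exact lt_irrefl 1 hgt
    obtain ⟨j₂, hj₂⟩ := h2
    obtain ⟨j₄, hj₄⟩ := h4
    have hTx_lt : ∀ i, T x i < r * T y i := by
      intro i
      have := tmul_lt_mul hk hB (fun j => (hx j).le) hr_pos h1 hj₂ i
      exact rpow_aux_lt hk (tmul_pos hn hB hx i).le hr_pos this
    have hTy_lt : ∀ i, T y i < r' * T x i := by
      intro i
      have := tmul_lt_mul hk hB (fun j => (hy j).le) hr'_pos h3 hj₄ i
      exact rpow_aux_lt hk (tmul_pos hn hB hy i).le hr'_pos this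
    have hMx := hMT x hx
    have hMy := hMT y hy
    -- rewrite the G-gauges
    have e1 : (fun i => G x i / G y i) =
        fun i => (supv hn (T y) / supv hn (T x)) * (T x i / T y i) := by
      funext i
      rw [hG]
      field_simp
    have e2 : (fun i => G y i / G x i) =
        fun i => (supv hn (T x) / supv hn (T y)) * (T y i / T x i) := by
      funext i
      rw [hG]
      field_simp
    have hS1 : supv hn (fun i => T x i / T y i) < r := by
      refine supv_lt hn fun i => ?_
      rw [div_lt_iff₀ (hTpos y hy i)]
      linarith [hTx_lt i]
    have hS2 : supv hn (fun i => T y i / T x i) < r' := by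
      refine supv_lt hn fun i => ?_
      rw [div_lt_iff₀ (hTpos x hx i)]
      linarith [hTy_lt i]
    have hS1_pos : 0 < supv hn (fun i => T x i / T y i) :=
      lt_of_lt_of_le (div_pos (hTpos x hx ⟨0, hn⟩) (hTpos y hy ⟨0, hn⟩))
        (le_supv hn (fun i => T x i / T y i) ⟨0, hn⟩)
    have hS2_pos : 0 < supv hn (fun i => T y i / T x i) :=
      lt_of_lt_of_le (div_pos (hTpos y hy ⟨0, hn⟩) (hTpos x hx ⟨0, hn⟩))
        (le_supv hn (fun i => T y i / T x i) ⟨0, hn⟩)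
    rw [e1, e2, supv_const_mul hn (div_pos hMy hMx) _, supv_const_mul hn (div_pos hMx hMy) _]
    have efin : (supv hn (T y) / supv hn (T x)) * supv hn (fun i => T x i / T y i) *
        ((supv hn (T x) / supv hn (T y)) * supv hn (fun i => T y i / T x i)) =
        supv hn (fun i => T x i / T y i) * supv hn (fun i => T y i / T x i) := by
      field_simp
    rw [efin]
    exact mul_lt_mul'' hS1 hS2 hS1_pos.le hS2_pos.le
  -- compactness and minimization
  have hcont_rpow : Continuous fun t : ℝ => t ^ ((k:ℝ)⁻¹) :=
    continuous_iff_continuousAt.mpr fun t =>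
      Real.continuousAt_rpow_const t _ (Or.inr (inv_nonneg.mpr (Nat.cast_nonneg k)))
  have hcT : ∀ i, Continuous fun x : Fin n → ℝ => T x i :=
    fun i => hcont_rpow.comp (continuous_tmul B i)
  have hcM : Continuous fun x : Fin n → ℝ => supv hn (T x) := by
    unfold supv
    exact continuous_finset_sup' _ hcT
  have hKcomp : IsCompact K := by
    rw [hKdef]
    exact (isCompact_univ_pi fun _ => isCompact_Icc).inter_right
      (isClosed_eq (continuous_supv hn) continuous_const)
  have hKne : K.Nonempty := by
    refine ⟨fun _ => 1, ?_⟩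
    rw [hmemK]
    exact ⟨fun i => ⟨hκinv_le, le_refl 1⟩, supv_const hn 1⟩
  have hΦcont : ContinuousOn Φ K := by
    have e : Φ = fun x =>
        (Finset.univ.sup' (Finset.univ_nonempty_iff.mpr inferInstance)
          fun i => x i * supv hn (T x) / T x i) *
        (Finset.univ.sup' (Finset.univ_nonempty_iff.mpr inferInstance)
          fun i => T x i / (supv hn (T x) * x i)) := by
      funext x
      rw [hΦeval x]
      unfold supv
      congr 1
      · apply Finset.sup'_congr _ rfl
        intro i _
        show x i / G x i = _
        rw [hG, div_div_eq_mul_div]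
        rfl
      · apply Finset.sup'_congr _ rfl
        intro i _
        show G x i / x i = _
        rw [hG, div_div]
        rfl
    rw [e]
    have hTne : ∀ x ∈ K, ∀ i, T x i ≠ 0 :=
      fun x hx i => (hTpos x (hKpos x hx) i).ne'
    refine ContinuousOn.mul ?_ ?_
    · refine continuousOn_finset_sup' _ fun i => ?_
      exact ((continuous_apply i).mul hcM).continuousOn.div
        (hcT i).continuousOn (fun x hx => hTne x hx i)
    · refine continuousOn_finset_sup' _ fun i => ?_
      exact (hcT i).continuousOn.div
        (hcM.mul (continuous_apply i)).continuousOn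
        (fun x hx => (mul_pos (hMT x (hKpos x hx)) (hKpos x hx i)).ne')
  obtain ⟨z, hzK, hzmin⟩ := hKcomp.exists_isMinOn hKne hΦcont
  have hzpos : ∀ i, 0 < z i := hKpos z hzK
  -- the minimum value is 1
  have hΦz_one : Φ z = 1 := by
    have hGz := hGpos z hzpos
    have hge := hone_le z (G z) hzpos hGz
    rcases lt_or_eq_of_le hge with hgt | heq
    · exfalso
      have hstep := hcontract z (G z) hzpos hGz hgt
      have h9 : Φ z ≤ Φ (G z) := isMinOn_iff.mp hzmin (G z) (hGK z hzpos)
      rw [hΦeval z, hΦeval (G z)] at h9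
      linarith
    · rw [hΦeval z, ← heq]
  -- extract the eigenvector
  have hGz := hGpos z hzpos
  set r : ℝ := supv hn (fun i => z i / G z i) with hrdef
  set r' : ℝ := supv hn (fun i => G z i / z i) with hr'def
  have hrr' : r * r' = 1 := by
    rw [hrdef, hr'def]
    rw [hΦeval z] at hΦz_one
    exact hΦz_one
  have hr_pos : 0 < r :=
    lt_of_lt_of_le (div_pos (hzpos ⟨0, hn⟩) (hGz ⟨0, hn⟩))
      (le_supv hn (fun i => z i / G z i) ⟨0, hn⟩)
  have hzeq : ∀ i, z i = r * G z i := by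
    intro i
    have hle : z i ≤ r * G z i := by
      have := le_supv hn (fun i => z i / G z i) i
      rw [← hrdef, div_le_iff₀ (hGz i)] at this
      linarith [this]
    have hge : r * G z i ≤ z i := by
      have h5 := le_supv hn (fun i => G z i / z i) i
      rw [← hr'def] at h5
      have hr'_eq : r' = r⁻¹ := by
        field_simp at hrr' ⊢
        linarith [hrr']
      rw [hr'_eq, div_le_iff₀ (hzpos i)] at h5
      have := mul_le_mul_of_nonneg_left h5 hr_pos.le
      rw [← mul_assoc, mul_inv_cancel₀ hr_pos.ne', one_mul] at this
      linarith [this]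
    linarith
  have hr_one : r = 1 := by
    have h6 : supv hn z = 1 := ((hmemK z).mp hzK).2
    have h7 : supv hn (G z) = 1 := ((hmemK (G z)).mp (hGK z hzpos)).2
    have h8 : supv hn z = r * supv hn (G z) := by
      have e := congrArg (supv hn) (funext hzeq)
      rw [supv_const_mul hn hr_pos] at e
      exact e
    rw [h6, h7, mul_one] at h8
    exact h8.symm
  have hfix : ∀ i, T z i = supv hn (T z) * z i := by
    intro i
    have := hzeq i
    rw [hr_one, one_mul, hG] at this
    rw [this]
    show T z i = supv hn (T z) * (T z i / supv hn (T z))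
    rw [mul_comm, div_mul_cancel₀ _ (hMT z hzpos).ne']
  -- conclude
  refine ⟨z, (supv hn (T z)) ^ k, hzpos, fun i => (((hmemK z).mp hzK).1 i).2, ?_, ?_, ?_⟩
  · obtain ⟨i, hi⟩ := exists_supv hn z
    exact ⟨i, by rw [← hi]; exact ((hmemK z).mp hzK).2⟩
  · exact pow_nonneg (hMT z hzpos).le k
  · intro i
    have h8 : tmul B z i = (T z i) ^ k := by
      rw [hT]
      rw [rpow_kinv_pow hk (tmul_pos hn hB hzpos i).le]
    rw [h8, hfix i, mul_pow]

end FixPt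
section Limit

open Filter Topology

variable {n k : ℕ}

lemma tmul_const (c : ℝ) (x : Fin n → ℝ) (i : Fin n) :
    tmul (n := n) (k := k) (fun _ _ => c) x i = c * (∑ j, x j) ^ k := by
  have h := tmul_allones (n := n) (k := k) x i
  unfold tmul at h ⊢
  simp only [one_mul] at h
  rw [← h, Finset.mul_sum]

lemma ctprod_real (A : Fin n → (Fin k → Fin n) → ℝ) (x : Fin n → ℝ) (i : Fin n) :
    ctprod A (fun j => (x j : ℂ)) i = ((tmul A x i : ℝ) : ℂ) := by
  unfold ctprod tmul
  push_cast
  rfl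

lemma not_semiPositive_specRad (hn : 0 < n) (hk : 0 < k) {s : ℝ}
    {B : Fin n → (Fin k → Fin n) → ℝ} (hB : ∀ i a, 0 ≤ B i a)
    (hns : ¬ SemiPositive (fun i js => s * unitT n k i js - B i js)) :
    s ≤ specRad B := by
  haveI : Nonempty (Fin n) := ⟨⟨0, hn⟩⟩
  have hns' : ∀ x : Fin n → ℝ, (∀ i, 0 < x i) → ∃ i, s * x i ^ k ≤ tmul B x i := by
    intro x hx
    by_contra hcon
    push_neg at hcon
    exact hns ⟨x, hx, fun i => by rw [tmul_smul_unitT hk]; linarith [hcon i]⟩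
  set ε : ℕ → ℝ := fun j => 1 / (j + 1) with hε
  have hεpos : ∀ j, 0 < ε j := fun j => by positivity
  have hε1 : ∀ j, ε j ≤ 1 := by
    intro j
    rw [hε]
    rw [div_le_one (by positivity)]
    have : (0:ℝ) ≤ (j:ℝ) := Nat.cast_nonneg j
    linarith
  set Bp : ℕ → Fin n → (Fin k → Fin n) → ℝ := fun j i a => B i a + ε j with hBp
  have hBp_pos : ∀ j i a, 0 < Bp j i a := fun j i a =>
    add_pos_of_nonneg_of_pos (hB i a) (hεpos j)
  choose x lam hxpos hxle hxone hlam0 heig using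
    fun j => exists_pos_eigenvec hn hk (hBp_pos j)
  have heq : ∀ j i, tmul B (x j) i + ε j * (∑ l, x j l) ^ k = lam j * (x j i) ^ k := by
    intro j i
    have h1 : tmul (Bp j) (x j) i = tmul B (x j) i + ε j * (∑ l, x j l) ^ k := by
      rw [hBp]
      rw [tmul_add B (fun _ _ => ε j) (x j) i]
      rw [tmul_const (ε j) (x j) i]
    rw [← h1]
    exact heig j i
  -- upper bound on the eigenvalues
  set Cb : ℝ := ∑ i, ∑ a : Fin k → Fin n, B i a with hCb
  set R : ℝ := Cb + (n : ℝ) ^ k with hR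
  have hsum_le : ∀ j, (∑ l, x j l) ≤ (n : ℝ) := by
    intro j
    calc (∑ l, x j l) ≤ ∑ _l : Fin n, (1:ℝ) :=
          Finset.sum_le_sum fun l _ => hxle j l
      _ = n := by simp
  have hsum_ge : ∀ j, (1:ℝ) ≤ ∑ l, x j l := by
    intro j
    obtain ⟨i₀, hi₀⟩ := hxone j
    calc (1:ℝ) = x j i₀ := hi₀.symm
      _ ≤ ∑ l, x j l := Finset.single_le_sum (f := fun l => x j l)
          (fun l _ => (hxpos j l).le) (Finset.mem_univ i₀)
  have hsum_nonneg : ∀ j, (0:ℝ) ≤ ∑ l, x j l := fun j => le_trans zero_le_one (hsum_ge j)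
  have hlam_le : ∀ j, lam j ≤ R := by
    intro j
    obtain ⟨i₀, hi₀⟩ := hxone j
    have h1 := heq j i₀
    rw [hi₀, one_pow, mul_one] at h1
    have h2 : tmul B (x j) i₀ ≤ Cb := by
      have h3 : tmul B (x j) i₀ ≤ ∑ a : Fin k → Fin n, B i₀ a := by
        unfold tmul
        refine Finset.sum_le_sum fun a _ => ?_
        have : (∏ l, x j (a l)) ≤ 1 :=
          Finset.prod_le_one (fun l _ => (hxpos j (a l)).le) (fun l _ => hxle j (a l))
        calc B i₀ a * ∏ l, x j (a l) ≤ B i₀ a * 1 :=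
              mul_le_mul_of_nonneg_left this (hB i₀ a)
          _ = B i₀ a := mul_one _
      refine h3.trans ?_
      exact Finset.single_le_sum (f := fun i => ∑ a : Fin k → Fin n, B i a)
        (fun i _ => Finset.sum_nonneg fun a _ => hB i a) (Finset.mem_univ i₀)
    have h4 : ε j * (∑ l, x j l) ^ k ≤ (n:ℝ) ^ k := by
      calc ε j * (∑ l, x j l) ^ k ≤ 1 * (∑ l, x j l) ^ k :=
            mul_le_mul_of_nonneg_right (hε1 j) (pow_nonneg (hsum_nonneg j) k)
        _ = (∑ l, x j l) ^ k := one_mul _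
        _ ≤ (n:ℝ) ^ k := pow_le_pow_left₀ (hsum_nonneg j) (hsum_le j) k
    rw [hR]
    linarith
  have hlam_ge : ∀ j, s ≤ lam j := by
    intro j
    obtain ⟨i, hi⟩ := hns' (x j) (hxpos j)
    have h1 := heq j i
    have h2 : (0:ℝ) < x j i ^ k := pow_pos (hxpos j i) k
    have h3 : 0 ≤ ε j * (∑ l, x j l) ^ k :=
      mul_nonneg (hεpos j).le (pow_nonneg (hsum_nonneg j) k)
    have h4 : s * x j i ^ k ≤ lam j * x j i ^ k := by linarith
    exact le_of_mul_le_mul_right h4 h2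
  -- pass to a convergent subsequence
  set seq : ℕ → (Fin n → ℝ) × ℝ := fun j => (x j, lam j) with hseq
  have hmem : ∀ j, seq j ∈
      (Set.univ.pi fun _ : Fin n => Set.Icc (0:ℝ) 1) ×ˢ Set.Icc s R := by
    intro j
    constructor
    · intro i _
      exact Set.mem_Icc.mpr ⟨(hxpos j i).le, hxle j i⟩
    · exact Set.mem_Icc.mpr ⟨hlam_ge j, hlam_le j⟩
  obtain ⟨⟨x0, lam0⟩, hmem0, φ, hφ, hconv⟩ :=
    ((isCompact_univ_pi fun _ : Fin n => isCompact_Icc).prod isCompact_Icc).tendsto_subseq hmem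
  have hx0conv : Tendsto (fun j => x (φ j)) atTop (𝓝 x0) :=
    (continuous_fst.tendsto (x0, lam0)).comp hconv
  have hlamconv : Tendsto (fun j => lam (φ j)) atTop (𝓝 lam0) :=
    (continuous_snd.tendsto (x0, lam0)).comp hconv
  have hxiconv : ∀ i, Tendsto (fun j => x (φ j) i) atTop (𝓝 (x0 i)) :=
    fun i => ((continuous_apply i).tendsto x0).comp hx0conv
  have hεconv : Tendsto (fun j => ε (φ j)) atTop (𝓝 0) :=
    tendsto_one_div_add_atTop_nhds_zero_nat.comp hφ.tendsto_atTop
  have hsumconv : Tendsto (fun j => ∑ l, x (φ j) l) atTop (𝓝 (∑ l, x0 l)) :=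
    ((continuous_finset_sum Finset.univ fun l _ => continuous_apply l).tendsto x0).comp hx0conv
  have heq0 : ∀ i, tmul B x0 i = lam0 * x0 i ^ k := by
    intro i
    have t1 : Tendsto (fun j => tmul B (x (φ j)) i + ε (φ j) * (∑ l, x (φ j) l) ^ k)
        atTop (𝓝 (tmul B x0 i + 0 * (∑ l, x0 l) ^ k)) :=
      (((continuous_tmul B i).tendsto x0).comp hx0conv).add (hεconv.mul (hsumconv.pow k))
    have t3 : Tendsto (fun j => lam (φ j) * (x (φ j) i) ^ k)
        atTop (𝓝 (lam0 * x0 i ^ k)) := hlamconv.mul ((hxiconv i).pow k)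
    have efun : (fun j => tmul B (x (φ j)) i + ε (φ j) * (∑ l, x (φ j) l) ^ k) =
        fun j => lam (φ j) * (x (φ j) i) ^ k := funext fun j => heq (φ j) i
    rw [efun] at t1
    have := tendsto_nhds_unique t1 t3
    rw [zero_mul, add_zero] at this
    exact this
  have hsum0 : (1:ℝ) ≤ ∑ l, x0 l :=
    ge_of_tendsto hsumconv (Filter.Eventually.of_forall fun j => hsum_ge (φ j))
  have hlam0_ge : s ≤ lam0 := (Set.mem_Icc.mp hmem0.2).1
  have hlam0_nonneg : 0 ≤ lam0 :=
    ge_of_tendsto hlamconv (Filter.Eventually.of_forall fun j => hlam0 (φ j))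
  -- lam0 is an eigenvalue of B
  have heigen : IsEigenvalue B (lam0 : ℂ) := by
    refine ⟨fun i => (x0 i : ℂ), ?_, ?_⟩
    · intro hzero
      have hall : ∀ i, x0 i = 0 := by
        intro i
        have := congrFun hzero i
        rw [Pi.zero_apply] at this
        exact_mod_cast this
      rw [Finset.sum_congr rfl fun l _ => hall l] at hsum0
      simp at hsum0
      linarith
    · intro i
      rw [ctprod_real B x0 i, heq0 i]
      push_cast
      ring
  have habs : ‖(lam0 : ℂ)‖ = lam0 := by
    rw [Complex.norm_real, Real.norm_eq_abs, abs_of_nonneg hlam0_nonneg]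
  calc s ≤ lam0 := hlam0_ge
    _ = ‖(lam0 : ℂ)‖ := habs.symm
    _ ≤ specRad B := by
        refine le_csSup (bddAbove_specSet hk B) ?_
        exact ⟨(lam0 : ℂ), heigen, rfl⟩

end Limit

/-- A Z-tensor `A = s I - B` (`B ≥ 0`) is a nonsingular M-tensor
(`s > ρ(B)`) iff it is semi-positive. -/
theorem stmt1 {n m : ℕ} (hn : 0 < n) (hm : 2 ≤ m) (s : ℝ)
    (B : Fin n → (Fin (m-1) → Fin n) → ℝ) (hB : ∀ i js, 0 ≤ B i js) :
    specRad B < s ↔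
      SemiPositive (fun i js => s * unitT n (m-1) i js - B i js) := by
  have hk : 0 < m - 1 := by omega
  constructor
  · intro h
    by_contra hns
    have := not_semiPositive_specRad hn hk hB hns
    linarith
  · intro h
    exact specRad_lt_of_semiPositive hn hk hB h
end
end

section
/- A Z-tensor A is semi-positive if and only if A has all positive diagonal entries and there exists a positive diagonal matrix D = diag(d_1,...,d_n) with all d_i > 0 such that A D^{m-1} is strictly diagonally dominant, i.e., |a_{i i ... i}| d_i^{m-1} > Σ_{(i2,...,im) ≠ (i,...,i)} |a_{i i2 ... im} d_{i2} ··· d_{im}| for every i = 1, ..., n. -/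
noncomputable section

/-- A Z-tensor is semi-positive iff it has positive diagonal entries and
there is a positive diagonal matrix `D = diag d` making `A D^{m-1}` strictly diagonally
dominant. -/
theorem stmt3 {n m : ℕ} (hm : 2 ≤ m) (A : Fin n → (Fin (m-1) → Fin n) → ℝ)
    (hZ : ZTensor A) :
    SemiPositive A ↔
      ((∀ i, 0 < A i (fun _ => i)) ∧
        ∃ d : Fin n → ℝ, (∀ i, 0 < d i) ∧
          ∀ i, |A i (fun _ => i)| * d i ^ (m-1) >
            ∑ js ∈ Finset.univ.filter (fun js : Fin (m-1) → Fin n => js ≠ (fun _ => i)),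
              |A i js * ∏ j, d (js j)|) := by
  have hk : ∀ (x : Fin n → ℝ), (∀ i, 0 < x i) → ∀ i,
      tmul A x i = A i (fun _ => i) * x i ^ (m-1)
        - ∑ js ∈ Finset.univ.filter (fun js : Fin (m-1) → Fin n => js ≠ (fun _ => i)),
            |A i js * ∏ j, x (js j)| := by
    intro x hx i
    have hmem : (fun _ => i) ∈ (Finset.univ : Finset (Fin (m-1) → Fin n)) :=
      Finset.mem_univ _
    rw [tmul, ← Finset.add_sum_erase _ _ hmem, ← Finset.filter_ne']
    have hdiag : (∏ j : Fin (m-1), x ((fun _ => i) j)) = x i ^ (m-1) := by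
      simp [Finset.prod_const]
    rw [hdiag]
    have hterm : ∀ js ∈ Finset.univ.filter
        (fun js : Fin (m-1) → Fin n => js ≠ (fun _ => i)),
        A i js * ∏ j, x (js j) = -|A i js * ∏ j, x (js j)| := by
      intro js hjs
      rw [Finset.mem_filter] at hjs
      have hA := hZ i js hjs.2
      have hp : (0:ℝ) ≤ ∏ j, x (js j) := (Finset.prod_pos (fun j _ => hx _)).le
      rw [abs_of_nonpos (mul_nonpos_of_nonpos_of_nonneg hA hp), neg_neg]
    rw [Finset.sum_congr rfl hterm, Finset.sum_neg_distrib, sub_eq_add_neg]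
  constructor
  · rintro ⟨x, hx, ht⟩
    have hsum : ∀ i, (0:ℝ) ≤ ∑ js ∈ Finset.univ.filter
        (fun js : Fin (m-1) → Fin n => js ≠ (fun _ => i)),
        |A i js * ∏ j, x (js j)| :=
      fun i => Finset.sum_nonneg (fun js _ => abs_nonneg _)
    have hdiagpos : ∀ i, 0 < A i (fun _ => i) := by
      intro i
      have h1 := ht i
      rw [hk x hx i] at h1
      have h2 : 0 < A i (fun _ => i) * x i ^ (m-1) := by linarith [hsum i]
      have h3 : 0 < x i ^ (m-1) := pow_pos (hx i) _
      by_contra hle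
      push_neg at hle
      nlinarith
    refine ⟨hdiagpos, x, hx, fun i => ?_⟩
    have h1 := ht i
    rw [hk x hx i] at h1
    rw [abs_of_pos (hdiagpos i)]
    linarith
  · rintro ⟨hdiag, d, hd, hdd⟩
    refine ⟨d, hd, fun i => ?_⟩
    rw [hk d hd i]
    have := hdd i
    rw [abs_of_pos (hdiag i)] at this
    linarith
end
end

section
/- A strictly diagonally dominant Z-tensor with all nonnegative diagonal entries is a semi-positive Z-tensor: if A is an m-order n-dimensional real tensor with all off-diagonal entries ≤ 0, all diagonal entries a_{i i ... i} ≥ 0, and a_{i i ... i} > Σ_{(i2,...,im) ≠ (i,...,i)} |a_{i i2 ... im}| for all i, then there exists x > 0 entrywise with A x^{m-1} > 0 entrywise. -/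
noncomputable section

/-- A strictly diagonally dominant Z-tensor with nonnegative diagonal
entries is semi-positive. -/
theorem stmt7 {n m : ℕ} (hm : 2 ≤ m) (A : Fin n → (Fin (m-1) → Fin n) → ℝ)
    (hZ : ZTensor A) (hdiag : ∀ i, 0 ≤ A i (fun _ => i))
    (hdd : ∀ i, A i (fun _ => i) >
      ∑ js ∈ Finset.univ.filter (fun js : Fin (m-1) → Fin n => js ≠ (fun _ => i)),
        |A i js|) :
    SemiPositive A := by
  refine ⟨fun _ => 1, fun i => one_pos, fun i => ?_⟩
  have h1 : tmul A (fun _ => 1) i = ∑ js : Fin (m-1) → Fin n, A i js := by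
    unfold tmul; simp
  rw [h1]
  have hsplit : ∑ js : Fin (m-1) → Fin n, A i js
      = A i (fun _ => i) + ∑ js ∈ Finset.univ.filter
          (fun js : Fin (m-1) → Fin n => js ≠ (fun _ => i)), A i js := by
    rw [← Finset.sum_filter_add_sum_filter_not Finset.univ
      (fun js : Fin (m-1) → Fin n => js = (fun _ => i))]
    congr 1
    rw [Finset.sum_filter]
    simp [Finset.sum_ite_eq']
  rw [hsplit]
  have hge : ∑ js ∈ Finset.univ.filter
      (fun js : Fin (m-1) → Fin n => js ≠ (fun _ => i)), A i js
      ≥ -∑ js ∈ Finset.univ.filter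
      (fun js : Fin (m-1) → Fin n => js ≠ (fun _ => i)), |A i js| := by
    rw [← Finset.sum_neg_distrib]
    exact Finset.sum_le_sum fun js _ => neg_abs_le _
  linarith [hdd i]
end
end

section
/- A weakly irreducible nonsingular M-tensor is a semi-positive Z-tensor: if A = s I − B with B entrywise nonnegative, s > ρ(B), and A is weakly irreducible, then there exists x > 0 entrywise with A x^{m-1} > 0 entrywise. -/
noncomputable section

/-- The representation matrix `GM(T)`: its `(i,j)` entry is the sum of `|t_{i i₂ ⋯ i_m}|`
over tuples `(i₂,…,i_m)` containing `j`. -/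
def GM {n k : ℕ} (T : Fin n → (Fin k → Fin n) → ℝ) : Fin n → Fin n → ℝ :=
  fun i j => ∑ js : Fin k → Fin n, if ∃ l, js l = j then |T i js| else 0

/-- A tensor is weakly irreducible if its representation matrix is irreducible. -/
def WeaklyIrreducible {n k : ℕ} (T : Fin n → (Fin k → Fin n) → ℝ) : Prop :=
  ∀ S : Set (Fin n), S.Nonempty → S ≠ Set.univ → ∃ i ∈ S, ∃ j, j ∉ S ∧ GM T i j ≠ 0

namespace Stmt8
variable {n k : ℕ}

lemma tmul_nonneg {B : Fin n → (Fin k → Fin n) → ℝ} (hB : ∀ i js, 0 ≤ B i js)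
    {x : Fin n → ℝ} (hx : ∀ i, 0 ≤ x i) (i : Fin n) : 0 ≤ tmul B x i :=
  Finset.sum_nonneg fun js _ => mul_nonneg (hB i js) (Finset.prod_nonneg fun j _ => hx _)

lemma sum_prod_eq (x : Fin n → ℝ) :
    ∑ js : Fin k → Fin n, ∏ j, x (js j) = (∑ i, x i) ^ k := by
  rw [← Fintype.prod_sum (f := fun (_ : Fin k) (j : Fin n) => x j)]
  simp [Finset.prod_const]

lemma tmul_smul (B : Fin n → (Fin k → Fin n) → ℝ) (x : Fin n → ℝ) (c : ℝ) (i : Fin n) :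
    tmul B (fun j => c * x j) i = c ^ k * tmul B x i := by
  unfold tmul
  rw [Finset.mul_sum]
  refine Finset.sum_congr rfl fun js _ => ?_
  rw [Finset.prod_mul_distrib, Finset.prod_const, Finset.card_univ, Fintype.card_fin]
  ring

lemma continuous_tmul (B : Fin n → (Fin k → Fin n) → ℝ) (i : Fin n) :
    Continuous fun x : Fin n → ℝ => tmul B x i := by
  unfold tmul
  exact continuous_finset_sum _ fun js _ =>
    (continuous_const.mul (continuous_finset_prod _ fun j _ => continuous_apply _))

lemma perron (hn : 0 < n) (hk : 0 < k) {ε : ℝ} (hε : 0 < ε)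
    (C : Fin n → (Fin k → Fin n) → ℝ) (hC : ∀ i js, ε ≤ C i js) :
    ∃ (y : Fin n → ℝ) (r : ℝ), (∀ i, 0 < y i) ∧ (∑ i, y i = 1) ∧ 0 ≤ r ∧
      ∀ i, tmul C y i = r * y i ^ k := by
  haveI : NeZero n := ⟨hn.ne'⟩
  have hC0 : ∀ i js, 0 ≤ C i js := fun i js => hε.le.trans (hC i js)
  set Mx : ℝ := ∑ i, ∑ js : Fin k → Fin n, C i js with hMx
  have hrowMx : ∀ i, (∑ js : Fin k → Fin n, C i js) ≤ Mx := by
    intro i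
    exact Finset.single_le_sum (f := fun i => ∑ js : Fin k → Fin n, C i js)
      (fun i _ => Finset.sum_nonneg fun js _ => hC0 i js) (Finset.mem_univ i)
  have hεMx : ε ≤ Mx := by
    refine le_trans ?_ (hrowMx ⟨0, hn⟩)
    refine le_trans (hC ⟨0, hn⟩ (fun _ => ⟨0, hn⟩)) ?_
    exact Finset.single_le_sum (fun js _ => hC0 _ js) (Finset.mem_univ _)
  -- simplex bounds
  have hsimp : ∀ y : Fin n → ℝ, (∀ i, 0 ≤ y i) → (∑ i, y i) = 1 →
      ∀ i, ε ≤ tmul C y i ∧ tmul C y i ≤ Mx := by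
    intro y hy0 hy1 i
    constructor
    · have : ∑ js : Fin k → Fin n, ε * ∏ j, y (js j) ≤ tmul C y i :=
        Finset.sum_le_sum fun js _ => mul_le_mul_of_nonneg_right (hC i js)
          (Finset.prod_nonneg fun j _ => hy0 _)
      rwa [← Finset.mul_sum, sum_prod_eq, hy1, one_pow, mul_one] at this
    · refine le_trans ?_ (hrowMx i)
      refine Finset.sum_le_sum fun js _ => ?_
      have hprod : (∏ j, y (js j)) ≤ 1 :=
        Finset.prod_le_one (fun j _ => hy0 _)
          (fun j _ => hy1 ▸ Finset.single_le_sum (fun i _ => hy0 i) (Finset.mem_univ _))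
      calc C i js * ∏ j, y (js j) ≤ C i js * 1 :=
            mul_le_mul_of_nonneg_left hprod (hC0 i js)
        _ = C i js := mul_one _
  set a : ℝ := ε ^ ((k : ℝ))⁻¹ with haa
  set b : ℝ := Mx ^ ((k : ℝ))⁻¹ with hbb
  have ha : 0 < a := Real.rpow_pos_of_pos hε _
  have hab : a ≤ b := Real.rpow_le_rpow hε.le hεMx (by positivity)
  set K : Set (Fin n → ℝ) := Set.Icc (fun _ => a) (fun _ => b) with hK
  have hKmem : ∀ x : Fin n → ℝ, x ∈ K ↔ (∀ i, a ≤ x i) ∧ ∀ i, x i ≤ b := by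
    intro x; constructor
    · rintro ⟨h1, h2⟩; exact ⟨fun i => h1 i, fun i => h2 i⟩
    · rintro ⟨h1, h2⟩; exact ⟨fun i => h1 i, fun i => h2 i⟩
  -- ratio bound on K
  set R' : ℝ := Mx * b ^ k / a ^ k with hR'
  have hratio : ∀ x ∈ K, ∀ i, tmul C x i / x i ^ k ≤ R' := by
    intro x hx i
    rw [hKmem] at hx
    have hup : tmul C x i ≤ Mx * b ^ k := by
      have : tmul C x i ≤ ∑ js : Fin k → Fin n, C i js * b ^ k := by
        refine Finset.sum_le_sum fun js _ => ?_
        refine mul_le_mul_of_nonneg_left ?_ (hC0 i js)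
        calc (∏ j, x (js j)) ≤ ∏ _j : Fin k, b :=
              Finset.prod_le_prod (fun j _ => (ha.trans_le (hx.1 _)).le)
                (fun j _ => hx.2 _)
          _ = b ^ k := by rw [Finset.prod_const, Finset.card_univ, Fintype.card_fin]
      rw [← Finset.sum_mul] at this
      exact this.trans (mul_le_mul_of_nonneg_right (hrowMx i)
        (pow_nonneg (ha.trans_le hab).le k))
    have hxa : a ^ k ≤ x i ^ k := pow_le_pow_left₀ ha.le (hx.1 i) k
    have hak : (0:ℝ) < a ^ k := pow_pos ha k
    exact div_le_div₀ (le_trans (tmul_nonneg hC0 (fun j => (ha.trans_le (hx.1 j)).le) i) hup)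
      hup hak hxa
  have hR'0 : 0 ≤ R' := by
    have := hratio (fun _ => a) (by rw [hKmem]; exact ⟨fun _ => le_refl a, fun _ => hab⟩) ⟨0, hn⟩
    refine le_trans ?_ this
    exact div_nonneg (tmul_nonneg hC0 (fun _ => ha.le) _) (pow_nonneg ha.le k)
  -- the feasible set
  set K' : Set ((Fin n → ℝ) × ℝ) :=
    (K ×ˢ Set.Icc (0:ℝ) R') ∩ ⋂ i, {p : (Fin n → ℝ) × ℝ | p.2 * p.1 i ^ k ≤ tmul C p.1 i}
    with hK'def
  have hK'c : IsCompact K' := by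
    refine ((isCompact_Icc).prod isCompact_Icc).inter_right ?_
    refine isClosed_iInter fun i => isClosed_le ?_ ?_
    · exact continuous_snd.mul (((continuous_apply i).comp continuous_fst).pow k)
    · exact (continuous_tmul C i).comp continuous_fst
  have haK : (fun _ => a) ∈ K := by rw [hKmem]; exact ⟨fun _ => le_refl a, fun _ => hab⟩
  have hK'ne : K'.Nonempty := by
    refine ⟨((fun _ => a), 0), ⟨⟨haK, le_refl 0, hR'0⟩, ?_⟩⟩
    simp only [Set.mem_iInter, Set.mem_setOf_eq]
    intro i
    rw [zero_mul]
    exact tmul_nonneg hC0 (fun _ => ha.le) i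
  obtain ⟨⟨z, r⟩, hmem, hmax⟩ := hK'c.exists_isMaxOn hK'ne continuous_snd.continuousOn
  obtain ⟨⟨hzK, hr0, hrR⟩, hgeI⟩ := hmem
  have hge : ∀ i, r * z i ^ k ≤ tmul C z i := by
    intro i
    exact Set.mem_iInter.mp hgeI i
  have hmax' : ∀ w ∈ K, ∀ r' : ℝ, 0 ≤ r' → r' ≤ R' → (∀ i, r' * w i ^ k ≤ tmul C w i) →
      r' ≤ r := by
    intro w hw r' h0 hR h
    have hwmem : ((w, r') : (Fin n → ℝ) × ℝ) ∈ K' :=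
      Set.mem_inter (Set.mem_prod.mpr ⟨hw, Set.mem_Icc.mpr ⟨h0, hR⟩⟩)
        (Set.mem_iInter.mpr fun i => h i)
    exact hmax hwmem
  have hzpos : ∀ i, 0 < z i := fun i => ha.trans_le (((hKmem z).mp hzK).1 i)
  -- the eigen equation holds at the maximizer
  have heq : ∀ i, tmul C z i = r * z i ^ k := by
    by_contra hne
    push_neg at hne
    obtain ⟨l, hl⟩ := hne
    have hlt : r * z l ^ k < tmul C z l := lt_of_le_of_ne (hge l) (Ne.symm hl)
    set c : ℝ := ∑ i, z i with hc
    have hcpos : 0 < c := Finset.sum_pos (fun i _ => hzpos i) Finset.univ_nonempty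
    set y : Fin n → ℝ := fun i => c⁻¹ * z i with hy
    have hy0 : ∀ i, 0 < y i := fun i => mul_pos (inv_pos.mpr hcpos) (hzpos i)
    have hy1 : ∑ i, y i = 1 := by
      rw [hy, ← Finset.mul_sum, ← hc, inv_mul_cancel₀ hcpos.ne']
    have hty : ∀ i, tmul C y i = c⁻¹ ^ k * tmul C z i := fun i => tmul_smul C z c⁻¹ i
    have hck : (0:ℝ) < c⁻¹ ^ k := pow_pos (inv_pos.mpr hcpos) k
    have hgy : ∀ i, r * y i ^ k ≤ tmul C y i := by
      intro i
      rw [hty i, hy]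
      simp only [mul_pow]
      calc r * (c⁻¹ ^ k * z i ^ k) = c⁻¹ ^ k * (r * z i ^ k) := by ring
        _ ≤ c⁻¹ ^ k * tmul C z i := mul_le_mul_of_nonneg_left (hge i) hck.le
    have hgyl : r * y l ^ k < tmul C y l := by
      rw [hty l, hy]
      simp only [mul_pow]
      calc r * (c⁻¹ ^ k * z l ^ k) = c⁻¹ ^ k * (r * z l ^ k) := by ring
        _ < c⁻¹ ^ k * tmul C z l := (mul_lt_mul_iff_right₀ hck).mpr hlt
    have hybnd := hsimp y (fun i => (hy0 i).le) hy1
    set w : Fin n → ℝ := fun i => (tmul C y i) ^ ((k:ℝ))⁻¹ with hw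
    have htypos : ∀ i, 0 < tmul C y i := fun i => hε.trans_le (hybnd i).1
    have hwK : w ∈ K := by
      rw [hKmem]
      constructor
      · intro i; exact Real.rpow_le_rpow hε.le (hybnd i).1 (by positivity)
      · intro i; exact Real.rpow_le_rpow (htypos i).le (hybnd i).2 (by positivity)
    have hwpos : ∀ i, 0 < w i := fun i => ha.trans_le (((hKmem w).mp hwK).1 i)
    have hwk : ∀ i, w i ^ k = tmul C y i := fun i =>
      Real.rpow_inv_natCast_pow (htypos i).le hk.ne'
    set ρ : ℝ := r ^ ((k:ℝ))⁻¹ with hρ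
    have hρ0 : 0 ≤ ρ := Real.rpow_nonneg hr0 _
    have hρk : ρ ^ k = r := Real.rpow_inv_natCast_pow hr0 hk.ne'
    have hwge : ∀ i, ρ * y i ≤ w i := by
      intro i
      have h1 : (r * y i ^ k) ^ ((k:ℝ))⁻¹ ≤ w i :=
        Real.rpow_le_rpow (mul_nonneg hr0 (pow_nonneg (hy0 i).le k)) (hgy i) (by positivity)
      refine le_trans (le_of_eq ?_) h1
      rw [Real.mul_rpow hr0 (pow_nonneg (hy0 i).le k),
        Real.pow_rpow_inv_natCast (hy0 i).le hk.ne']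
    have hwl : ρ * y l < w l := by
      have h1 : (r * y l ^ k) ^ ((k:ℝ))⁻¹ < w l :=
        Real.rpow_lt_rpow (mul_nonneg hr0 (pow_nonneg (hy0 l).le k)) hgyl (by positivity)
      refine lt_of_le_of_lt (le_of_eq ?_) h1
      rw [Real.mul_rpow hr0 (pow_nonneg (hy0 l).le k),
        Real.pow_rpow_inv_natCast (hy0 l).le hk.ne']
    have hkey : ∀ i, r * w i ^ k < tmul C w i := by
      intro i
      have hlhs : r * w i ^ k = ∑ js : Fin k → Fin n, C i js * ∏ j, (ρ * y (js j)) := by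
        rw [hwk i]
        unfold tmul
        rw [Finset.mul_sum]
        refine Finset.sum_congr rfl fun js _ => ?_
        have hp : (∏ j, (ρ * y (js j))) = ρ ^ k * ∏ j, y (js j) := by
          rw [Finset.prod_mul_distrib, Finset.prod_const, Finset.card_univ, Fintype.card_fin]
        rw [hp, hρk]
        ring
      rw [hlhs]
      unfold tmul
      refine Finset.sum_lt_sum (fun js _ => ?_) ⟨(fun _ => l), Finset.mem_univ _, ?_⟩
      · refine mul_le_mul_of_nonneg_left ?_ (hC0 i js)
        refine Finset.prod_le_prod (fun j _ => mul_nonneg hρ0 (hy0 _).le)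
          (fun j _ => hwge (js j))
      · refine (mul_lt_mul_iff_right₀ (hε.trans_le (hC i (fun _ => l)))).mpr ?_
        simp only [Finset.prod_const, Finset.card_univ, Fintype.card_fin]
        exact pow_lt_pow_left₀ hwl (mul_nonneg hρ0 (hy0 l).le) hk.ne'
    set r' : ℝ := Finset.univ.inf' Finset.univ_nonempty (fun i => tmul C w i / w i ^ k)
      with hr'def
    have hr'gt : r < r' := by
      rw [hr'def, Finset.lt_inf'_iff]
      intro i _
      rw [lt_div_iff₀ (pow_pos (hwpos i) k)]
      exact hkey i
    have hr'le : ∀ i, r' * w i ^ k ≤ tmul C w i := by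
      intro i
      have h2 := Finset.inf'_le (fun i => tmul C w i / w i ^ k) (Finset.mem_univ i)
      rw [← hr'def] at h2
      rw [le_div_iff₀ (pow_pos (hwpos i) k)] at h2
      exact h2
    have hr'R : r' ≤ R' := by
      obtain ⟨i0, -, hi0⟩ := Finset.exists_mem_eq_inf' Finset.univ_nonempty
        (fun i => tmul C w i / w i ^ k)
      rw [hr'def, hi0]
      exact hratio w hwK i0
    exact absurd (hmax' w hwK r' (hr0.trans hr'gt.le) hr'R hr'le) (not_le.mpr hr'gt)
  set c : ℝ := ∑ i, z i with hc
  have hcpos : 0 < c := Finset.sum_pos (fun i _ => hzpos i) Finset.univ_nonempty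
  refine ⟨fun i => c⁻¹ * z i, r, fun i => mul_pos (inv_pos.mpr hcpos) (hzpos i), ?_, hr0, ?_⟩
  · rw [← Finset.mul_sum, ← hc, inv_mul_cancel₀ hcpos.ne']
  · intro i
    rw [tmul_smul, heq i, mul_pow]
    ring
variable {n k : ℕ}

lemma tmul_unitT (x : Fin n → ℝ) (i : Fin n) :
    ∑ js : Fin k → Fin n, unitT n k i js * ∏ j, x (js j) = x i ^ k := by
  unfold unitT
  rw [Finset.sum_eq_single (fun _ => i)]
  · simp [Finset.prod_const]
  · intro js _ hne; simp [hne]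
  · simp

lemma tmul_sub (s : ℝ) (B : Fin n → (Fin k → Fin n) → ℝ) (x : Fin n → ℝ) (i : Fin n) :
    tmul (fun i js => s * unitT n k i js - B i js) x i = s * x i ^ k - tmul B x i := by
  unfold tmul
  have h1 : ∀ js : Fin k → Fin n, (s * unitT n k i js - B i js) * ∏ j, x (js j)
      = s * (unitT n k i js * ∏ j, x (js j)) - B i js * ∏ j, x (js j) := fun js => by ring
  rw [Finset.sum_congr rfl fun js _ => h1 js, Finset.sum_sub_distrib, ← Finset.mul_sum,
    tmul_unitT x i]

lemma eig_bound {B : Fin n → (Fin k → Fin n) → ℝ} (hB : ∀ i js, 0 ≤ B i js) (hn : 0 < n)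
    {μ : ℂ} (hμ : IsEigenvalue B μ) :
    ‖μ‖ ≤ ∑ i, ∑ js : Fin k → Fin n, B i js := by
  haveI : NeZero n := ⟨hn.ne'⟩
  obtain ⟨u, hu0, hu⟩ := hμ
  obtain ⟨i0, -, hmax⟩ := Finset.exists_max_image Finset.univ
    (fun i => ‖u i‖) Finset.univ_nonempty
  have hpos : 0 < ‖u i0‖ := by
    obtain ⟨j, hj⟩ : ∃ j, u j ≠ 0 := by
      by_contra h; push_neg at h; exact hu0 (funext h)
    exact lt_of_lt_of_le (norm_pos_iff.mpr hj) (hmax j (Finset.mem_univ j))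
  have h1 : ‖ctprod B u i0‖ = ‖μ‖ * ‖u i0‖ ^ k := by
    rw [hu i0, norm_mul, norm_pow]
  have h2 : ‖ctprod B u i0‖
      ≤ (∑ js : Fin k → Fin n, B i0 js) * ‖u i0‖ ^ k := by
    refine le_trans (norm_sum_le _ _) ?_
    rw [Finset.sum_mul]
    refine Finset.sum_le_sum fun js _ => ?_
    rw [norm_mul, Complex.norm_real, Real.norm_eq_abs, abs_of_nonneg (hB i0 js), norm_prod]
    refine mul_le_mul_of_nonneg_left ?_ (hB i0 js)
    calc (∏ j, ‖u (js j)‖) ≤ ∏ _j : Fin k, ‖u i0‖ :=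
          Finset.prod_le_prod (fun j _ => norm_nonneg _)
            (fun j _ => hmax (js j) (Finset.mem_univ _))
      _ = ‖u i0‖ ^ k := by
          rw [Finset.prod_const, Finset.card_univ, Fintype.card_fin]
  have h3 : ‖μ‖ * ‖u i0‖ ^ k
      ≤ (∑ js : Fin k → Fin n, B i0 js) * ‖u i0‖ ^ k := h1 ▸ h2
  have h4 : ‖μ‖ ≤ ∑ js : Fin k → Fin n, B i0 js :=
    le_of_mul_le_mul_right h3 (pow_pos hpos k)
  refine h4.trans (Finset.single_le_sum (f := fun i => ∑ js : Fin k → Fin n, B i js)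
    (fun i _ => Finset.sum_nonneg fun js _ => hB i js) (Finset.mem_univ i0))

end Stmt8

open Filter in
lemma Stmt8.main {n k : ℕ} (hn : 0 < n) (hk : 0 < k) (s : ℝ)
    (B : Fin n → (Fin k → Fin n) → ℝ) (hB : ∀ i js, 0 ≤ B i js)
    (hs : specRad B < s) :
    SemiPositive (fun i js => s * unitT n k i js - B i js) := by
  haveI : NeZero n := ⟨hn.ne'⟩
  set Sall : ℝ := ∑ i, ∑ js : Fin k → Fin n, B i js with hSall
  have hSall0 : 0 ≤ Sall :=
    Finset.sum_nonneg fun i _ => Finset.sum_nonneg fun js _ => hB i js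
  have hchoice : ∀ t : ℕ, ∃ (y : Fin n → ℝ) (r : ℝ), (∀ i, 0 < y i) ∧ (∑ i, y i = 1) ∧
      0 ≤ r ∧ ∀ i, tmul (fun i js => B i js + (1/((t:ℝ)+1))) y i = r * y i ^ k := by
    intro t
    refine perron hn hk (ε := 1/((t:ℝ)+1)) (by positivity) _ (fun i js => ?_)
    exact le_add_of_nonneg_left (hB i js)
  choose y r hy0 hy1 hr0 heig using hchoice
  have hyle1 : ∀ t i, y t i ≤ 1 := by
    intro t i
    rw [← hy1 t]
    exact Finset.single_le_sum (fun i _ => (hy0 t i).le) (Finset.mem_univ i)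
  have hCexp : ∀ t (x : Fin n → ℝ), (∑ i, x i = 1) → ∀ i,
      tmul (fun i js => B i js + (1/((t:ℝ)+1))) x i = tmul B x i + 1/((t:ℝ)+1) := by
    intro t x hx1 i
    unfold tmul
    have h1 : ∀ js : Fin k → Fin n, (B i js + (1/((t:ℝ)+1))) * ∏ j, x (js j)
        = B i js * ∏ j, x (js j) + (1/((t:ℝ)+1)) * ∏ j, x (js j) := fun js => by ring
    rw [Finset.sum_congr rfl fun js _ => h1 js, Finset.sum_add_distrib, ← Finset.mul_sum,
      sum_prod_eq, hx1, one_pow, mul_one]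
  have hBrel : ∀ t i, tmul B (y t) i = r t * (y t i) ^ k - 1/((t:ℝ)+1) := by
    intro t i
    have h2 := heig t i
    rw [hCexp t (y t) (hy1 t) i] at h2
    linarith
  set R : ℝ := (n:ℝ) ^ k * (Sall + (n:ℝ)^k) with hR
  have hrR : ∀ t, r t ≤ R := by
    intro t
    obtain ⟨i, -, hi⟩ : ∃ i ∈ Finset.univ, (1:ℝ)/(n:ℝ) ≤ y t i := by
      refine Finset.exists_le_of_sum_le Finset.univ_nonempty ?_
      rw [hy1 t, Finset.sum_const, Finset.card_univ, Fintype.card_fin, nsmul_eq_mul]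
      rw [mul_one_div, div_self (by positivity : (n:ℝ) ≠ 0)]
    have hb1 : tmul B (y t) i ≤ Sall := by
      have h3 : tmul B (y t) i ≤ ∑ js : Fin k → Fin n, B i js := by
        refine Finset.sum_le_sum fun js _ => ?_
        have h4 : (∏ j, y t (js j)) ≤ 1 :=
          Finset.prod_le_one (fun j _ => (hy0 t _).le) (fun j _ => hyle1 t _)
        calc B i js * ∏ j, y t (js j) ≤ B i js * 1 :=
              mul_le_mul_of_nonneg_left h4 (hB i js)
          _ = B i js := mul_one _
      exact h3.trans (Finset.single_le_sum (f := fun i => ∑ js : Fin k → Fin n, B i js)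
        (fun i _ => Finset.sum_nonneg fun js _ => hB i js) (Finset.mem_univ i))
    have hup : r t * y t i ^ k ≤ Sall + (n:ℝ)^k := by
      have h5 := heig t i
      rw [hCexp t (y t) (hy1 t) i] at h5
      have hε1 : 1/((t:ℝ)+1) ≤ 1 := by
        rw [div_le_one (by positivity)]
        simp
      have hn1 : (1:ℝ) ≤ (n:ℝ)^k := one_le_pow₀ (by exact_mod_cast hn)
      linarith
    have hyik : ((1:ℝ)/(n:ℝ))^k ≤ y t i ^ k :=
      pow_le_pow_left₀ (by positivity) hi k
    have hnk : ((1:ℝ)/(n:ℝ))^k = ((n:ℝ)^k)⁻¹ := by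
      rw [one_div, inv_pow]
    have h6 : r t * ((n:ℝ)^k)⁻¹ ≤ Sall + (n:ℝ)^k := by
      rw [← hnk]
      exact le_trans (mul_le_mul_of_nonneg_left hyik (hr0 t)) hup
    rw [hR]
    have hnkpos : (0:ℝ) < (n:ℝ)^k := by positivity
    calc r t = ((n:ℝ)^k) * (r t * ((n:ℝ)^k)⁻¹) := by
          field_simp
      _ ≤ ((n:ℝ)^k) * (Sall + (n:ℝ)^k) :=
          mul_le_mul_of_nonneg_left h6 hnkpos.le
  -- compactness and limit
  set p : ℕ → (Fin n → ℝ) × ℝ := fun t => (y t, r t) with hp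
  have hpmem : ∀ t, p t ∈
      (Set.Icc (fun _ => (0:ℝ)) (fun _ => (1:ℝ)) : Set (Fin n → ℝ)) ×ˢ Set.Icc (0:ℝ) R := by
    intro t
    refine Set.mem_prod.mpr ⟨⟨fun i => (hy0 t i).le, fun i => hyle1 t i⟩,
      Set.mem_Icc.mpr ⟨hr0 t, hrR t⟩⟩
  obtain ⟨⟨ys, rs⟩, hmem, φ, hφ, hconv⟩ :=
    ((isCompact_Icc).prod isCompact_Icc).tendsto_subseq hpmem
  have hyconv : Tendsto (fun t => y (φ t)) atTop (nhds ys) :=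
    (continuous_fst.tendsto _).comp hconv
  have hrconv : Tendsto (fun t => r (φ t)) atTop (nhds rs) :=
    (continuous_snd.tendsto _).comp hconv
  have hεconv : Tendsto (fun t => 1/((φ t : ℝ)+1)) atTop (nhds 0) :=
    tendsto_one_div_add_atTop_nhds_zero_nat.comp hφ.tendsto_atTop
  have hys0 : ∀ i, 0 ≤ ys i := fun i => (Set.mem_prod.mp hmem).1.1 i
  have hrs0 : 0 ≤ rs := (Set.mem_Icc.mp (Set.mem_prod.mp hmem).2).1
  have hys1 : ∑ i, ys i = 1 := by
    have h7 : Tendsto (fun t => ∑ i, y (φ t) i) atTop (nhds (∑ i, ys i)) := by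
      refine tendsto_finset_sum _ fun i _ => ?_
      exact ((continuous_apply i).tendsto _).comp hyconv
    have h8 : (fun t => ∑ i, y (φ t) i) = fun _ => (1:ℝ) := funext fun t => hy1 (φ t)
    rw [h8] at h7
    exact tendsto_nhds_unique h7 tendsto_const_nhds
  have heigs : ∀ i, tmul B ys i = rs * ys i ^ k := by
    intro i
    have hL : Tendsto (fun t => tmul B (y (φ t)) i) atTop (nhds (tmul B ys i)) :=
      ((continuous_tmul B i).tendsto _).comp hyconv
    have hR2 : Tendsto (fun t => r (φ t) * (y (φ t) i) ^ k - 1/((φ t : ℝ)+1)) atTop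
        (nhds (rs * ys i ^ k - 0)) :=
      (hrconv.mul ((((continuous_apply i).tendsto _).comp hyconv).pow k)).sub hεconv
    rw [sub_zero] at hR2
    have h9 : (fun t => tmul B (y (φ t)) i)
        = fun t => r (φ t) * (y (φ t) i) ^ k - 1/((φ t : ℝ)+1) :=
      funext fun t => hBrel (φ t) i
    rw [h9] at hL
    exact tendsto_nhds_unique hL hR2
  have hev : IsEigenvalue B (rs : ℂ) := by
    refine ⟨fun i => (ys i : ℂ), ?_, ?_⟩
    · intro h
      have h10 : ∀ i, ys i = 0 := by
        intro i
        have := congrFun h i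
        simpa using this
      rw [Finset.sum_congr rfl fun i _ => h10 i, Finset.sum_const, smul_zero] at hys1
      exact one_ne_zero hys1.symm
    · intro i
      unfold ctprod
      have h11 : ∀ js : Fin k → Fin n, ((B i js : ℝ):ℂ) * ∏ j, ((ys (js j) : ℝ):ℂ)
          = ((B i js * ∏ j, ys (js j) : ℝ) : ℂ) := fun js => by push_cast; ring
      rw [Finset.sum_congr rfl fun js _ => h11 js, ← Complex.ofReal_sum]
      have h12 : (∑ js : Fin k → Fin n, B i js * ∏ j, ys (js j)) = tmul B ys i := rfl
      rw [h12, heigs i]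
      push_cast
      ring
  have hBdd : BddAbove ((fun lam : ℂ => ‖lam‖) '' {lam | IsEigenvalue B lam}) := by
    refine ⟨Sall, ?_⟩
    rintro x ⟨μ, hμ, rfl⟩
    exact eig_bound hB hn hμ
  have hrs_le : rs ≤ specRad B := by
    have hmem2 : ‖(rs : ℂ)‖ ∈
        (fun lam : ℂ => ‖lam‖) '' {lam | IsEigenvalue B lam} := ⟨(rs:ℂ), hev, rfl⟩
    have h13 := le_csSup hBdd hmem2
    rwa [Complex.norm_real, Real.norm_eq_abs, abs_of_nonneg hrs0] at h13
  have hrs_lt : rs < s := lt_of_le_of_lt hrs_le hs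
  obtain ⟨T, hT⟩ := (hrconv.eventually_lt_const hrs_lt).exists
  refine ⟨y (φ T), hy0 _, fun i => ?_⟩
  rw [tmul_sub, hBrel (φ T) i]
  have h5 : 0 < y (φ T) i ^ k := pow_pos (hy0 _ i) k
  have h6 : (0:ℝ) < 1/((φ T : ℝ)+1) := by positivity
  nlinarith [mul_pos (sub_pos.mpr hT) h5]


/-- A weakly irreducible nonsingular M-tensor is semi-positive. -/
theorem stmt8 {n m : ℕ} (hn : 0 < n) (hm : 2 ≤ m) (s : ℝ)
    (B : Fin n → (Fin (m-1) → Fin n) → ℝ) (hB : ∀ i js, 0 ≤ B i js)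
    (hs : specRad B < s)
    (hwi : WeaklyIrreducible (fun i js => s * unitT n (m-1) i js - B i js)) :
    SemiPositive (fun i js => s * unitT n (m-1) i js - B i js) :=
  Stmt8.main hn (by omega) s B hB hs
end
end

section
/- A semi-nonnegative Z-tensor is an M-tensor: if A = s I − B with s > 0, B entrywise nonnegative, and there exists x > 0 entrywise with A x^{m-1} ≥ 0 entrywise, then s ≥ ρ(B). -/
noncomputable section

/-- A semi-nonnegative Z-tensor is an M-tensor: if `A = s I - B` with
`s > 0`, `B ≥ 0` and there is `x > 0` with `A x^{m-1} ≥ 0`, then `s ≥ ρ(B)`. -/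
theorem stmt10 {n m : ℕ} (hn : 0 < n) (hm : 2 ≤ m) (s : ℝ) (hs : 0 < s)
    (B : Fin n → (Fin (m-1) → Fin n) → ℝ) (hB : ∀ i js, 0 ≤ B i js)
    (hsn : ∃ x : Fin n → ℝ, (∀ i, 0 < x i) ∧
      ∀ i, 0 ≤ tmul (fun i' js => s * unitT n (m-1) i' js - B i' js) x i) :
    specRad B ≤ s := by
  obtain ⟨x, hx, hAx⟩ := hsn
  -- tmul of A = s x^k - tmul B x
  have htA : ∀ i, tmul (fun i' js => s * unitT n (m-1) i' js - B i' js) x i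
      = s * x i ^ (m-1) - tmul B x i := by
    intro i
    simp only [tmul, sub_mul]
    rw [Finset.sum_sub_distrib]
    congr 1
    have hfun : (fun js : Fin (m-1) → Fin n => s * unitT n (m-1) i js * ∏ j, x (js j))
        = fun js => if js = (fun _ => i) then s * x i ^ (m-1) else 0 := by
      funext js
      by_cases h : js = fun _ => i
      · subst h; simp [unitT, Finset.prod_const]
      · simp [unitT, h]
    rw [hfun, Finset.sum_ite_eq' Finset.univ (fun _ => i)
      (fun _ => s * x i ^ (m-1))]
    simp
  have hBx : ∀ i, tmul B x i ≤ s * x i ^ (m-1) := by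
    intro i
    have := hAx i
    rw [htA i] at this
    linarith
  apply Real.sSup_le _ hs.le
  rintro r ⟨lam, ⟨y, hy0, heig⟩, rfl⟩
  haveI : Nonempty (Fin n) := ⟨⟨0, hn⟩⟩
  obtain ⟨i0, hi0⟩ := Finite.exists_max (fun i => ‖y i‖ / x i)
  set t : ℝ := ‖y i0‖ / x i0 with ht
  have hyle : ∀ i, ‖y i‖ ≤ t * x i := by
    intro i
    have := hi0 i
    rwa [div_le_iff₀ (hx i)] at this
  have ht0 : 0 < t := by
    obtain ⟨j, hj⟩ := Function.ne_iff.mp hy0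
    have h1 : 0 < ‖y j‖ / x j :=
      div_pos (norm_pos_iff.mpr hj) (hx j)
    exact lt_of_lt_of_le h1 (hi0 j)
  have hyi0 : ‖y i0‖ = t * x i0 := by
    rw [ht, div_mul_cancel₀ _ (hx i0).ne']
  have key : ‖lam‖ * (t ^ (m-1) * x i0 ^ (m-1))
      ≤ s * (t ^ (m-1) * x i0 ^ (m-1)) := by
    have h1 : ‖lam * y i0 ^ (m-1)‖
        = ‖lam‖ * (t ^ (m-1) * x i0 ^ (m-1)) := by
      rw [norm_mul, norm_pow, hyi0, mul_pow]
    have h2 : ‖ctprod B y i0‖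
        ≤ ∑ js : Fin (m-1) → Fin n, B i0 js * ∏ j, (t * x (js j)) := by
      refine (norm_sum_le _ _).trans (Finset.sum_le_sum ?_)
      intro js _
      rw [norm_mul, norm_prod, Complex.norm_of_nonneg (hB i0 js)]
      refine mul_le_mul_of_nonneg_left ?_ (hB i0 js)
      refine Finset.prod_le_prod (fun j _ => norm_nonneg _) ?_
      intro j _
      exact hyle (js j)
    have h3 : ∑ js : Fin (m-1) → Fin n, B i0 js * ∏ j, (t * x (js j))
        = t ^ (m-1) * tmul B x i0 := by
      simp only [tmul, Finset.mul_sum, Finset.prod_mul_distrib,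
        Finset.prod_const, Finset.card_fin]
      exact Finset.sum_congr rfl (fun js _ => by ring)
    have h4 : t ^ (m-1) * tmul B x i0 ≤ s * (t ^ (m-1) * x i0 ^ (m-1)) := by
      have := mul_le_mul_of_nonneg_left (hBx i0) (pow_nonneg ht0.le (m-1))
      linarith [this]
    calc ‖lam‖ * (t ^ (m-1) * x i0 ^ (m-1))
        = ‖ctprod B y i0‖ := by rw [heig i0, h1]
      _ ≤ t ^ (m-1) * tmul B x i0 := by rw [← h3]; exact h2
      _ ≤ s * (t ^ (m-1) * x i0 ^ (m-1)) := h4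
  have hpos : 0 < t ^ (m-1) * x i0 ^ (m-1) :=
    mul_pos (pow_pos ht0 _) (pow_pos (hx i0) _)
  exact le_of_mul_le_mul_right (by linarith [key]) hpos
end
end

section
/- An even-order monotone tensor has no zero H-eigenvalue: if A is an m-order n-dimensional real tensor with m even that is monotone, then there is no nonzero x ∈ ℝ^n with A x^{m-1} = 0. -/
noncomputable section

/-- An even-order monotone tensor has no zero H-eigenvalue. -/
theorem stmt14 {n m : ℕ} (hm : 2 ≤ m) (hme : Even m)
    (A : Fin n → (Fin (m-1) → Fin n) → ℝ) (hmono : MonotoneT A) :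
    ¬ ∃ x : Fin n → ℝ, x ≠ 0 ∧ ∀ i, tmul A x i = 0 := by
  rintro ⟨x, hx, hAx⟩
  have hneg : ∀ i, tmul A (-x) i = (-1 : ℝ) ^ (m - 1) * tmul A x i := by
    intro i
    simp only [tmul, Finset.mul_sum]
    refine Finset.sum_congr rfl fun js _ => ?_
    have : ∏ j, (-x) (js j) = (-1 : ℝ) ^ (m - 1) * ∏ j, x (js j) := by
      calc ∏ j, (-x) (js j) = ∏ j : Fin (m-1), (-1 : ℝ) * x (js j) := by
            refine Finset.prod_congr rfl fun j _ => ?_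
            rw [Pi.neg_apply, neg_one_mul]
        _ = (-1 : ℝ) ^ (m - 1) * ∏ j, x (js j) := by
            rw [Finset.prod_mul_distrib, Finset.prod_const, Finset.card_univ,
              Fintype.card_fin]
    rw [this]; ring
  have h1 : ∀ i, 0 ≤ x i := hmono x fun i => (hAx i).ge
  have h2 : ∀ i, 0 ≤ -(x i) := fun i => by
    simpa using hmono (-x) (fun i => by rw [hneg i, hAx i, mul_zero]) i
  exact hx (funext fun i => by simp only [Pi.zero_apply]; linarith [h1 i, h2 i])
end
end
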